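/- Let k > 0, a ∈ ℝ, σ > 0, λ ∈ (1/2, 1), and let B : [0,∞) → ℝ satisfy B(0) = 0 and be λ-Hölder continuous on every compact interval [0,T] (i.e. for every T > 0 there is C with |B(t) − B(s)| ≤ C·|t − s|^λ for all 0 ≤ s ≤ t ≤ T). Let Y : [0,∞) → ℝ be continuous with Y(0) > 0, and suppose that for every t ≥ 0 with inf_{s∈[0,t]} Y(s) > 0 one has Y(t) = Y(0) + (1/2)∫₀ᵗ (k/Y(s) − a·Y(s)) ds + (σ/2)·B(t). Then Y(t) > 0 for all t ≥ 0; that is, Y never hits zero. -/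

import Mathlib

/-!
Suppose `Y` first vanishes at `T > 0`, and look at a window `[T - δ, T]` on which the driving
noise oscillates by at most `ω ≍ δ ^ l`. Let `M` be the maximum of `Y` on the window. Running
the equation from the point where `M` is attained up to `T`, the drift `k / Y` only pushes
upwards, so `M ≲ ω`. Running it from `T - δ` up to `T`, the drift contributes at least
`k δ / M`, which the noise has to cancel, so `k δ / M ≲ ω`. Together `k δ ≲ ω ^ 2 ≍ δ ^ (2 l)`,
impossible for small `δ` because `2 l > 1`.
-/

open Set Filter Topology MeasureTheory

theorem exists_first_zero_of_continuousOn_Ici {Y : ℝ → ℝ} {a : ℝ} (hY : ContinuousOn Y (Ici a))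
    (ha : 0 < Y a) (h : ∃ t, a ≤ t ∧ Y t ≤ 0) :
    ∃ T, a < T ∧ Y T = 0 ∧ ∀ t ∈ Ico a T, 0 < Y t := by
  set S := Ici a ∩ Y ⁻¹' Iic 0
  have hS : IsClosed S := hY.preimage_isClosed_of_isClosed isClosed_Ici isClosed_Iic
  have hSbdd : BddBelow S := ⟨a, fun _ ht => ht.1⟩
  obtain ⟨haT, hYT⟩ : sInf S ∈ S := hS.csInf_mem h hSbdd
  have hpos : ∀ t ∈ Ico a (sInf S), 0 < Y t := fun t ht =>
    lt_of_not_ge fun hYt => (csInf_le hSbdd ⟨ht.1, hYt⟩).not_gt ht.2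
  have haT : a < sInf S := lt_of_le_of_ne haT fun h => (h ▸ hYT).not_gt ha
  refine ⟨sInf S, haT, le_antisymm hYT ?_, hpos⟩
  refine ContinuousWithinAt.closure_le (s := Ico a (sInf S)) ?_ continuousWithinAt_const
    ((hY (sInf S) haT.le).mono Ico_subset_Ici_self) fun t ht => (hpos t ht).le
  rw [closure_Ico haT.ne]
  exact right_mem_Icc.2 haT.le

theorem sInf_image_Icc_pos {Y : ℝ → ℝ} {a b : ℝ} (hab : a ≤ b) (hY : ContinuousOn Y (Icc a b))
    (hpos : ∀ t ∈ Icc a b, 0 < Y t) : 0 < sInf (Y '' Icc a b) := by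
  obtain ⟨t, ht, hmin⟩ := (isCompact_Icc.image_of_continuousOn hY).sInf_mem
    ((nonempty_Icc.2 hab).image Y)
  exact hmin ▸ hpos t ht

theorem abs_mul_sub_le_of_holder {B : ℝ → ℝ} {C l T δ : ℝ} (c : ℝ) (hl : 0 ≤ l)
    (hC : ∀ s t : ℝ, 0 ≤ s → s ≤ t → t ≤ T → |B t - B s| ≤ C * (t - s) ^ l) (hδT : δ ≤ T)
    {s t : ℝ} (hs : T - δ ≤ s) (hst : s ≤ t) (ht : t ≤ T) :
    |c * B t - c * B s| ≤ |c| * |C| * δ ^ l := by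
  rw [← mul_sub, abs_mul, mul_assoc]
  gcongr
  calc |B t - B s| ≤ C * (t - s) ^ l := hC s t (by linarith) hst ht
    _ ≤ |C| * δ ^ l := by gcongr; exacts [le_abs_self C, by linarith]

theorem eventually_four_mul_sq_mul_rpow_lt_mul {l κ : ℝ} (hl : 1 / 2 < l) (hκ : 0 < κ) (c : ℝ) :
    ∀ᶠ δ in 𝓝[>] 0, 4 * (c * δ ^ l) ^ 2 < κ * δ := by
  have hcont : ContinuousAt (fun δ : ℝ => 4 * c ^ 2 * δ ^ (2 * l - 1)) 0 :=
    continuousAt_const.mul (Real.continuousAt_rpow_const 0 _ (Or.inr (by linarith)))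
  have hsmall : ∀ᶠ δ in 𝓝 (0 : ℝ), 4 * c ^ 2 * δ ^ (2 * l - 1) < κ :=
    hcont.eventually_lt continuousAt_const
      (by simp [Real.zero_rpow (by linarith : 2 * l - 1 ≠ 0), hκ])
  filter_upwards [nhdsWithin_le_nhds hsmall, self_mem_nhdsWithin] with δ hδ (hδ0 : 0 < δ)
  have hpow : (δ ^ l) ^ 2 = δ ^ (2 * l - 1) * δ := by
    rw [← Real.rpow_natCast, ← Real.rpow_mul hδ0.le, ← Real.rpow_add_one hδ0.ne']
    push_cast
    ring_nf
  calc 4 * (c * δ ^ l) ^ 2 = 4 * c ^ 2 * δ ^ (2 * l - 1) * δ := by rw [mul_pow, hpow]; ring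
    _ < κ * δ := by gcongr

theorem mul_sub_le_integral_div_sub_mul {Y : ℝ → ℝ} {κ α M s t : ℝ} (hκ : 0 ≤ κ) (hst : s ≤ t)
    (hY : ContinuousOn Y (Icc s t)) (hpos : ∀ x ∈ Icc s t, 0 < Y x)
    (hM : ∀ x ∈ Icc s t, Y x ≤ M) :
    (t - s) * (κ / M - |α| * M) ≤ ∫ x in s..t, (κ / Y x - α * Y x) := by
  have hint : IntervalIntegrable (fun x => κ / Y x - α * Y x) volume s t :=
    ((continuousOn_const.div hY fun x hx => (hpos x hx).ne').sub
      (continuousOn_const.mul hY)).intervalIntegrable_of_Icc hst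
  calc (t - s) * (κ / M - |α| * M)
      = ∫ _ in s..t, (κ / M - |α| * M) := by rw [intervalIntegral.integral_const, smul_eq_mul]
    _ ≤ ∫ x in s..t, (κ / Y x - α * Y x) := by
      refine intervalIntegral.integral_mono_on hst intervalIntegrable_const hint fun x hx => ?_
      have hdiv : κ / M ≤ κ / Y x := div_le_div_of_nonneg_left hκ (hpos x hx) (hM x hx)
      have hmul : α * Y x ≤ |α| * M := calc
        α * Y x ≤ |α| * Y x := mul_le_mul_of_nonneg_right (le_abs_self α) (hpos x hx).le
        _ ≤ |α| * M := mul_le_mul_of_nonneg_left (hM x hx) (abs_nonneg α)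
      linarith

theorem sub_eq_integral_add_sub_of_sInf_pos {Y B : ℝ → ℝ} {k a σ T : ℝ}
    (hYcont : ContinuousOn Y (Icc 0 T)) (hpos : ∀ t ∈ Ico 0 T, 0 < Y t)
    (hY : ∀ t : ℝ, 0 ≤ t → 0 < sInf (Y '' Icc 0 t) →
      Y t = Y 0 + (1 / 2) * (∫ s in (0:ℝ)..t, (k / Y s - a * Y s)) + (σ / 2) * B t)
    {s t : ℝ} (hs : 0 ≤ s) (hst : s ≤ t) (ht : t < T) :
    Y t - Y s = (∫ r in s..t, (k / 2 / Y r - a / 2 * Y r)) + (σ / 2 * B t - σ / 2 * B s) := by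
  have hcont : ∀ t < T, ContinuousOn Y (Icc 0 t) := fun t ht =>
    hYcont.mono (Icc_subset_Icc_right ht.le)
  have hposIcc : ∀ t < T, ∀ x ∈ Icc 0 t, 0 < Y x := fun t ht x hx =>
    hpos x ⟨hx.1, hx.2.trans_lt ht⟩
  have hdrift : ∀ t, 0 ≤ t → t < T →
      Y t = Y 0 + (∫ r in (0:ℝ)..t, (k / 2 / Y r - a / 2 * Y r)) + σ / 2 * B t := by
    intro t ht htT
    rw [hY t ht (sInf_image_Icc_pos ht (hcont t htT) (hposIcc t htT)),
      ← intervalIntegral.integral_const_mul]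
    congr 2
    exact intervalIntegral.integral_congr fun r _ => by ring
  have hint : ∀ t, 0 ≤ t → t < T →
      IntervalIntegrable (fun r => k / 2 / Y r - a / 2 * Y r) volume 0 t := fun t ht htT =>
    ((continuousOn_const.div (hcont t htT) fun x hx => (hposIcc t htT x hx).ne').sub
      (continuousOn_const.mul (hcont t htT))).intervalIntegrable_of_Icc ht
  have hsT := hst.trans_lt ht
  rw [hdrift t (hs.trans hst) ht, hdrift s hs hsT,
    ← intervalIntegral.integral_interval_sub_left (hint t (hs.trans hst) ht) (hint s hs hsT)]
  ring

section HittingZero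

variable {Y W : ℝ → ℝ} {κ α ω u T : ℝ}

theorem add_mul_le_of_hits_zero (hκ : 0 ≤ κ) (hY : ContinuousOn Y (Icc u T))
    (hpos : ∀ t ∈ Ico u T, 0 < Y t) (hYT : Y T = 0)
    (hW : ∀ s t, u ≤ s → s ≤ t → t < T → |W t - W s| ≤ ω)
    (hEq : ∀ s t, u ≤ s → s ≤ t → t < T →
      Y t - Y s = (∫ r in s..t, (κ / Y r - α * Y r)) + (W t - W s))
    {M : ℝ} (hM : ∀ t ∈ Icc u T, Y t ≤ M) {s : ℝ} (hs : s ∈ Ico u T) :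
    Y s + (T - s) * (κ / M - |α| * M) ≤ ω := by
  have hclosure : T ∈ closure (Ico s T) := by
    rw [closure_Ico hs.2.ne]
    exact right_mem_Icc.2 hs.2.le
  suffices Y s + (T - s) * (κ / M - |α| * M) - ω ≤ Y T by linarith
  refine ContinuousWithinAt.closure_le (f := fun t => Y s + (t - s) * (κ / M - |α| * M) - ω)
    hclosure (by fun_prop) ((hY T (right_mem_Icc.2 (hs.1.trans hs.2.le))).mono
      (Ico_subset_Icc_self.trans (Icc_subset_Icc_left hs.1))) fun t ht => ?_
  have hsub : Icc s t ⊆ Ico u T := Icc_subset_Ico hs.1 ht.2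
  have hdrift := mul_sub_le_integral_div_sub_mul (α := α) hκ ht.1
    (hY.mono (hsub.trans Ico_subset_Icc_self)) (fun x hx => hpos x (hsub hx))
    (fun x hx => hM x (Ico_subset_Icc_self (hsub hx)))
  have hWst := (abs_le.1 (hW s t hs.1 ht.1 ht.2)).1
  linarith [hEq s t hs.1 ht.1 ht.2]

theorem mul_le_four_mul_sq_of_hits_zero (hκ : 0 ≤ κ) (huT : u < T)
    (hα : 2 * |α| * (T - u) < 1) (hY : ContinuousOn Y (Icc u T))
    (hpos : ∀ t ∈ Ico u T, 0 < Y t) (hYT : Y T = 0)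
    (hW : ∀ s t, u ≤ s → s ≤ t → t < T → |W t - W s| ≤ ω)
    (hEq : ∀ s t, u ≤ s → s ≤ t → t < T →
      Y t - Y s = (∫ r in s..t, (κ / Y r - α * Y r)) + (W t - W s)) :
    κ * (T - u) ≤ 4 * ω ^ 2 := by
  obtain ⟨s, hs, hM⟩ := isCompact_Icc.exists_isMaxOn (nonempty_Icc.2 huT.le) hY
  have hMpos : 0 < Y s := (hpos u ⟨le_rfl, huT⟩).trans_le (hM ⟨le_rfl, huT.le⟩)
  have hsT : s ∈ Ico u T := ⟨hs.1, lt_of_le_of_ne hs.2 fun h => (h ▸ hMpos).ne' hYT⟩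
  set M := Y s
  have hbound : ∀ s' ∈ Ico u T, Y s' + (T - s') * (κ / M - |α| * M) ≤ ω := fun _ hs' =>
    add_mul_le_of_hits_zero hκ hY hpos hYT hW hEq (fun t ht => isMaxOn_iff.1 hM t ht) hs'
  have hαM : (T - u) * |α| * M ≤ M / 2 := by nlinarith [abs_nonneg α]
  have hMω : M ≤ 2 * ω := by
    have hsu : (T - s) * |α| * M ≤ (T - u) * |α| * M := by gcongr; exact hs.1
    have hκM : 0 ≤ (T - s) * (κ / M) := mul_nonneg (by linarith [hsT.2]) (by positivity)
    linarith [hbound s hsT]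
  have hκδ : κ * (T - u) / M ≤ 2 * ω := by
    have hu := hbound u ⟨le_rfl, huT⟩
    have hYu := hpos u ⟨le_rfl, huT⟩
    rw [mul_div_right_comm]
    linarith
  calc κ * (T - u) = κ * (T - u) / M * M := (div_mul_cancel₀ _ hMpos.ne').symm
    _ ≤ 2 * ω * (2 * ω) := by gcongr; linarith
    _ = 4 * ω ^ 2 := by ring

end HittingZero

theorem fCIR_never_hits_zero_pathwise (k a σ l : ℝ) (hk : 0 < k)
    (hl : 1 / 2 < l)
    (B : ℝ → ℝ)
    (hBHolder : ∀ T : ℝ, 0 < T → ∃ C : ℝ, ∀ s t : ℝ, 0 ≤ s → s ≤ t → t ≤ T →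
      |B t - B s| ≤ C * (t - s) ^ l)
    (Y : ℝ → ℝ) (hYcont : ContinuousOn Y (Set.Ici 0)) (hY0 : 0 < Y 0)
    (hY : ∀ t : ℝ, 0 ≤ t → 0 < sInf (Y '' Set.Icc 0 t) →
      Y t = Y 0 + (1 / 2) * (∫ s in (0:ℝ)..t, (k / Y s - a * Y s)) + (σ / 2) * B t) :
    ∀ t : ℝ, 0 ≤ t → 0 < Y t := by
  by_contra! hneg
  obtain ⟨T, hT, hYT, hpos⟩ := exists_first_zero_of_continuousOn_Ici hYcont hY0 hneg
  obtain ⟨C, hC⟩ := hBHolder T hT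
  have hsmall : ∀ᶠ δ in 𝓝 (0 : ℝ), δ ≤ T ∧ 2 * |a / 2| * δ < 1 :=
    (eventually_le_nhds hT).and
      (ContinuousAt.eventually_lt (by fun_prop) continuousAt_const (by simp))
  obtain ⟨δ, ⟨hδ, hδT, hαδ⟩, hδ0 : 0 < δ⟩ := ((eventually_four_mul_sq_mul_rpow_lt_mul hl
    (half_pos hk) (|σ / 2| * |C|)).and (nhdsWithin_le_nhds hsmall)).and self_mem_nhdsWithin
    |>.exists
  have hwindow := mul_le_four_mul_sq_of_hits_zero (half_pos hk).le (sub_lt_self T hδ0)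
    (by rwa [sub_sub_cancel])
    (hYcont.mono (Icc_subset_Ici_self.trans (Ici_subset_Ici.2 (by linarith))))
    (fun t ht => hpos t ⟨by linarith [ht.1], ht.2⟩) hYT
    (fun s t hs hst ht => abs_mul_sub_le_of_holder (σ / 2) (by linarith) hC hδT hs hst ht.le)
    (fun s t hs hst ht => sub_eq_integral_add_sub_of_sInf_pos
      (hYcont.mono Icc_subset_Ici_self) hpos hY (by linarith) hst ht)
  rw [sub_sub_cancel] at hwindow
  linarith
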